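/- Let k be a commutative unital ring, C_∞ the free associative unital k-algebra on generators d_1, d_2, …, bigraded by assigning the word d_{i_1}⋯d_{i_k} bidegree (−∑_j i_j, k − ∑_j i_j), with S_1 = 0, S_m = ∑_{u+v=m, u,v≥1} (-1)^{u+1} d_u d_v for m ≥ 2, and δ_0 the bidegree-(0,1) k-linear endomorphism determined on words by δ_0(d_{i_1}⋯d_{i_k}) = ∑_{j=1}^{k} (-1)^{(i_1+1)+⋯+(i_{j-1}+1)} d_{i_1}⋯d_{i_{j-1}} S_{i_j} d_{i_{j+1}}⋯d_{i_k}. For 1 ≤ n ≤ ∞, let I_n be the two-sided ideal generated by {S_m, d_m : m ≥ n} (with I_∞ = 0) and let C_n = C_∞/I_n, equipped with the differential induced by δ_0 (which preserves each I_n). Then for all 2 ≤ n ≤ l ≤ ∞, the natural surjection Φ_{l,n} : C_l → C_n induces isomorphisms on δ_0-cohomology in every bidegree (p,q). -/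

import Mathlib

set_option linter.unusedVariables false
set_option synthInstance.maxHeartbeats 1000000
set_option maxHeartbeats 1000000

universe u

noncomputable section

/-- The free associative unital `k`-algebra on generators `d_1, d_2, …`
(indexed by `ℕ+`), realized as the monoid algebra on the free monoid on `ℕ+`,
with `k`-basis the words `d_{i_1} ⋯ d_{i_k}`. -/
abbrev Cinf (k : Type u) [CommRing k] := MonoidAlgebra k (FreeMonoid ℕ+)

variable (k : Type u) [CommRing k]

/-- The basis word `d_{i_1} ⋯ d_{i_k}` of `C_∞`. -/
def word (w : List ℕ+) : Cinf k :=
  MonoidAlgebra.of k (FreeMonoid ℕ+) (FreeMonoid.ofList w)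

/-- `S_1 = 0` and `S_m = ∑_{u+v=m, u,v ≥ 1} (-1)^{u+1} d_u d_v` for `m ≥ 2`. -/
def Sel (m : ℕ+) : Cinf k :=
  ∑ u : Fin ((m : ℕ) - 1), ((-1 : ℤ) ^ ((u : ℕ) + 1 + 1)) •
    word k [⟨(u : ℕ) + 1, Nat.succ_pos _⟩,
            ⟨(m : ℕ) - ((u : ℕ) + 1), by have := u.isLt; omega⟩]

/-- The value of `δ_0` on the word `d_{i_1} ⋯ d_{i_k}`:
`∑_{j=1}^{k} (-1)^{(i_1+1)+⋯+(i_{j-1}+1)} d_{i_1} ⋯ d_{i_{j-1}} S_{i_j} d_{i_{j+1}} ⋯ d_{i_k}`. -/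
def deltaWord (w : List ℕ+) : Cinf k :=
  ∑ j : Fin w.length,
    ((-1 : ℤ) ^ (∑ t : Fin (j : ℕ), ((w.get ⟨(t : ℕ), Nat.lt_trans t.isLt j.isLt⟩ : ℕ) + 1))) •
      (word k (w.take (j : ℕ)) * Sel k (w.get j) * word k (w.drop ((j : ℕ) + 1)))

/-- The `k`-linear endomorphism `δ_0` of `C_∞`, determined on words by `deltaWord`. -/
def delta0 : Cinf k →ₗ[k] Cinf k :=
  (Finsupp.lift (Cinf k) k (FreeMonoid ℕ+)) (fun w => deltaWord k w.toList) ∘ₗ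
    (MonoidAlgebra.coeffLinearEquiv k).toLinearMap

/-- The value of `h` on words: `h(1) = 0`, `h(d_{i_1}⋯d_{i_k}) = 0` if `k = 1` or
`i_1 > 1`, and `h(d_1 d_{i_2} ⋯ d_{i_k}) = d_{i_2+1} d_{i_3} ⋯ d_{i_k}`. -/
def hWord : List ℕ+ → Cinf k
  | [] => 0
  | [_] => 0
  | (i :: j :: w) => if i = 1 then word k ((j + 1) :: w) else 0

/-- The `k`-linear endomorphism `h` of `C_∞`, determined on words by `hWord`. -/
def hmap : Cinf k →ₗ[k] Cinf k :=
  (Finsupp.lift (Cinf k) k (FreeMonoid ℕ+)) (fun w => hWord k w.toList) ∘ₗ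
    (MonoidAlgebra.coeffLinearEquiv k).toLinearMap

/-- The bidegree of a word: `d_{i_1}⋯d_{i_k}` has bidegree `(-∑ i_j, k - ∑ i_j)`. -/
def wordDeg (w : List ℕ+) : ℤ × ℤ :=
  (-(w.map (fun i => ((i : ℕ) : ℤ))).sum,
    (w.length : ℤ) - (w.map (fun i => ((i : ℕ) : ℤ))).sum)

/-- `x ∈ C_∞` is homogeneous of bidegree `(p,q)`: every word in its support has
bidegree `(p,q)`. -/
def IsHomog (p q : ℤ) (x : Cinf k) : Prop :=
  ∀ w ∈ (x.coeff : FreeMonoid ℕ+ →₀ k).support, wordDeg w.toList = (p, q)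

end

noncomputable section
variable (k : Type u) [CommRing k]

/-- Generating set of the two-sided ideal `I_n` (`n ∈ ℕ∞`, with `I_∞ = 0`): all
`a * S_m * b` and `a * d_m * b` with `m ≥ n`. -/
def IgenSetE (n : ℕ∞) : Set (Cinf k) :=
  {x | ∃ (a b : Cinf k) (m : ℕ+), n ≤ ((m : ℕ) : ℕ∞) ∧
    (x = a * Sel k m * b ∨ x = a * word k [m] * b)}

/-- The two-sided ideal `I_n` of `C_∞` as a `k`-submodule. -/
def IsubE (n : ℕ∞) : Submodule k (Cinf k) := Submodule.span k (IgenSetE k n)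

/-- `C_n = C_∞ / I_n`. -/
def Cn (n : ℕ∞) := Cinf k ⧸ IsubE k n

instance (n : ℕ∞) : AddCommGroup (Cn k n) := by unfold Cn; infer_instance
instance (n : ℕ∞) : Module k (Cn k n) := by unfold Cn; infer_instance

/-- The quotient map `C_∞ → C_n`. -/
def CnMk (n : ℕ∞) : Cinf k →ₗ[k] Cn k n := (IsubE k n).mkQ

theorem IsubE_mono {n l : ℕ∞} (h : n ≤ l) : IsubE k l ≤ IsubE k n :=
  Submodule.span_mono (fun x hx => by
    obtain ⟨a, b, m, hm, hx⟩ := hx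
    exact ⟨a, b, m, le_trans h hm, hx⟩)

/-- The natural surjection `Φ_{l,n} : C_l → C_n` for `n ≤ l`. -/
def PhiMap (n l : ℕ∞) (h : n ≤ l) : Cn k l →ₗ[k] Cn k n :=
  Submodule.mapQ (IsubE k l) (IsubE k n) LinearMap.id (fun x hx => IsubE_mono k h hx)

/-- A class in `C_n` is homogeneous of bidegree `(p,q)` if it has a homogeneous
representative of bidegree `(p,q)`. -/
def IsHomogQ (n : ℕ∞) (p q : ℤ) (z : Cn k n) : Prop :=
  ∃ x : Cinf k, IsHomog k p q x ∧ CnMk k n x = z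

end

noncomputable section Basics
variable (k : Type u) [CommRing k]

theorem word_nil : word k [] = 1 := rfl

theorem word_append (u v : List ℕ+) : word k (u ++ v) = word k u * word k v := by
  unfold word
  rw [← map_mul]
  rfl

theorem word_cons (a : ℕ+) (l : List ℕ+) : word k (a :: l) = word k [a] * word k l := by
  rw [← word_append]; rfl

theorem single_eq_smul_word (a : FreeMonoid ℕ+) (c : k) :
    (MonoidAlgebra.single a c : Cinf k) = c • word k a.toList := by
  unfold word
  rw [MonoidAlgebra.of_apply, FreeMonoid.ofList_toList, MonoidAlgebra.smul_single, smul_eq_mul,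
    mul_one]

theorem eq_on_words {M : Type u} [AddCommMonoid M] [Module k M]
    (f g : Cinf k →ₗ[k] M) (h : ∀ w : List ℕ+, f (word k w) = g (word k w)) :
    ∀ x : Cinf k, f x = g x := by
  intro x
  have : f = g := by
    apply LinearMap.ext
    intro y
    induction y using MonoidAlgebra.induction_linear with
    | zero => rw [map_zero, map_zero]
    | add x y hx hy => rw [map_add, map_add, hx, hy]
    | single a b =>
    rw [show (MonoidAlgebra.single a b : Cinf k) = b • word k a.toList from single_eq_smul_word k a b,
      map_smul, map_smul]
    exact congrArg _ (h _)
  rw [this]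

theorem delta0_word (w : List ℕ+) : delta0 k (word k w) = deltaWord k w := by
  unfold delta0 word
  rw [MonoidAlgebra.of_apply]
  show (Finsupp.lift (Cinf k) k (FreeMonoid ℕ+) _) (Finsupp.single (FreeMonoid.ofList w) (1:k)) = _
  erw [Finsupp.lift_apply, Finsupp.sum_single_index (by simp)]
  rw [one_smul, FreeMonoid.toList_ofList]

theorem hmap_word (w : List ℕ+) : hmap k (word k w) = hWord k w := by
  unfold hmap word
  rw [MonoidAlgebra.of_apply]
  show (Finsupp.lift (Cinf k) k (FreeMonoid ℕ+) _) (Finsupp.single (FreeMonoid.ofList w) (1:k)) = _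
  erw [Finsupp.lift_apply, Finsupp.sum_single_index (by simp)]
  rw [one_smul, FreeMonoid.toList_ofList]

end Basics
namespace QI
noncomputable section DW
variable (k : Type u) [CommRing k]

/-- weight of a word: `∑ (i_j + 1)`. -/
def wt : List ℕ+ → ℕ
  | [] => 0
  | i :: u => ((i : ℕ) + 1) + wt u

theorem wt_nil : wt [] = 0 := rfl
theorem wt_cons (i : ℕ+) (u : List ℕ+) : wt (i :: u) = ((i:ℕ)+1) + wt u := rfl
theorem wt_append (u v : List ℕ+) : wt (u ++ v) = wt u + wt v := by
  induction u with
  | nil => simp [wt_nil]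
  | cons i u ih => rw [List.cons_append, wt_cons, wt_cons, ih]; omega

theorem deltaWord_nil : deltaWord k [] = 0 := by unfold deltaWord; simp

theorem Sel_one : Sel k 1 = 0 := by
  unfold Sel; exact Finset.sum_eq_zero fun u _ => by have := u.isLt; simp at this

theorem sign_sum (w : List ℕ+) : ∀ (j : ℕ) (h : j ≤ w.length),
    (∑ t : Fin j, ((w.get ⟨(t:ℕ), lt_of_lt_of_le t.isLt h⟩ : ℕ) + 1)) = wt (w.take j) := by
  induction w with
  | nil =>
    intro j h
    have hj : j = 0 := by simpa using h
    subst hj; simp [wt_nil]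
  | cons i w ih =>
    intro j h
    match j with
    | 0 => simp [wt_nil]
    | (j+1) =>
      rw [Fin.sum_univ_succ]
      simp only [List.get_eq_getElem, List.getElem_cons_zero, Fin.val_zero, Fin.val_succ,
        List.getElem_cons_succ, List.take_succ_cons, wt_cons]
      congr 1
      have h' : j ≤ w.length := by simpa using h
      rw [← ih j h']
      apply Finset.sum_congr rfl
      intro t _
      simp [List.get_eq_getElem]

theorem deltaWord_eq (w : List ℕ+) :
    deltaWord k w = ∑ j ∈ Finset.range w.length,
      ((-1 : ℤ) ^ wt (w.take j)) •
        (word k (w.take j) * Sel k (w.getD j 1) * word k (w.drop (j + 1))) := by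
  unfold deltaWord
  rw [← Fin.sum_univ_eq_sum_range]
  apply Finset.sum_congr rfl
  intro j _
  have h1 : (∑ t : Fin (j:ℕ), ((w.get ⟨(t:ℕ), Nat.lt_trans t.isLt j.isLt⟩ : ℕ) + 1))
      = wt (w.take (j:ℕ)) := by
    rw [← sign_sum w (j:ℕ) (le_of_lt j.isLt)]
  have h2 : w.get j = w.getD (j:ℕ) 1 := by
    rw [List.getD_eq_getElem w 1 j.isLt]; simp [List.get_eq_getElem]
  rw [h1, h2]

theorem deltaWord_cons (i : ℕ+) (w : List ℕ+) :
    deltaWord k (i :: w) =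
      Sel k i * word k w + ((-1 : ℤ) ^ ((i : ℕ) + 1)) • (word k [i] * deltaWord k w) := by
  rw [deltaWord_eq, deltaWord_eq]
  rw [List.length_cons, Finset.sum_range_succ', add_comm]
  congr 1
  · simp [wt_nil, word_nil]
  · rw [Finset.mul_sum, Finset.smul_sum]
    apply Finset.sum_congr rfl
    intro j _
    simp only [List.take_succ_cons, List.getD_cons_succ, List.drop_succ_cons, wt_cons]
    rw [word_cons k i (w.take j), pow_add, mul_smul, mul_smul_comm]
    congr 1
    congr 1
    simp [mul_assoc]

theorem deltaWord_singleton (i : ℕ+) : deltaWord k [i] = Sel k i := by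
  rw [deltaWord_cons, deltaWord_nil, word_nil, mul_one]
  simp

theorem deltaWord_append (u v : List ℕ+) :
    deltaWord k (u ++ v) = deltaWord k u * word k v
      + ((-1 : ℤ) ^ wt u) • (word k u * deltaWord k v) := by
  induction u with
  | nil =>
    simp [deltaWord_nil, wt_nil, word_nil]
  | cons i u ih =>
    rw [List.cons_append, deltaWord_cons, deltaWord_cons, ih, word_append, wt_cons,
      word_cons k i u]
    simp only [mul_add, add_mul, smul_add, smul_mul_assoc, mul_smul_comm, smul_smul,
      mul_assoc, pow_add, pow_one]
    match_scalars <;> ring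

end DW
end QI
namespace QI
noncomputable section KEY
variable (k : Type u) [CommRing k]

/-- `pno a`: the positive natural `max a 1`. -/
def pno (a : ℕ) : ℕ+ := ⟨max a 1, by omega⟩

theorem pno_coe (a : ℕ) (h : 1 ≤ a) : ((pno a : ℕ+) : ℕ) = a := by
  simp [pno]; omega

theorem sel_eq (m : ℕ+) :
    Sel k m = ∑ a ∈ Finset.range ((m:ℕ) - 1),
      ((-1 : ℤ) ^ a) • word k [pno (a+1), pno ((m:ℕ) - 1 - a)] := by
  unfold Sel
  rw [← Fin.sum_univ_eq_sum_range]
  apply Finset.sum_congr rfl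
  intro u _
  have hs : ((-1 : ℤ)) ^ ((u:ℕ) + 1 + 1) = (-1 : ℤ) ^ (u:ℕ) := by
    rw [pow_succ, pow_succ]; ring
  rw [hs]
  congr 2
  refine congr_arg₂ List.cons (Subtype.ext ?_) (congr_arg₂ List.cons (Subtype.ext ?_) rfl)
  · simp [pno]
  · have := u.isLt; simp [pno]; omega

theorem deltaWord_pair (a b : ℕ+) :
    deltaWord k [a, b] = Sel k a * word k [b]
      + ((-1:ℤ) ^ ((a:ℕ)+1)) • (word k [a] * Sel k b) := by
  rw [deltaWord_cons, deltaWord_singleton]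

theorem key_identity (m : ℕ) :
    (∑ a ∈ Finset.range (m-1),
        ((-1:ℤ)^a) • (Sel k (pno (a+1)) * word k [pno (m-1-a)]))
      + (∑ a ∈ Finset.range (m-1), word k [pno (a+1)] * Sel k (pno (m-1-a))) = 0 := by
  have hsel : ∀ a ∈ Finset.range (m-1),
      Sel k (pno (a+1)) * word k [pno (m-1-a)]
        = ∑ i ∈ Finset.range a, ((-1:ℤ)^i) • word k [pno (i+1), pno (a-i), pno (m-1-a)] := by
    intro a ha
    rw [sel_eq, pno_coe _ (by omega)]
    have h1 : a + 1 - 1 = a := by omega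
    rw [h1, Finset.sum_mul]
    apply Finset.sum_congr rfl
    intro i hi
    rw [smul_mul_assoc, ← word_append]
    simp only [List.cons_append, List.nil_append]
  have hsel2 : ∀ a ∈ Finset.range (m-1),
      word k [pno (a+1)] * Sel k (pno (m-1-a))
        = ∑ j ∈ Finset.range (m-2-a), ((-1:ℤ)^j) • word k [pno (a+1), pno (j+1), pno (m-2-a-j)] := by
    intro a ha
    rw [Finset.mem_range] at ha
    rw [sel_eq, pno_coe _ (by omega)]
    have h1 : m - 1 - a - 1 = m - 2 - a := by omega
    rw [h1, Finset.mul_sum]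
    apply Finset.sum_congr rfl
    intro j hj
    rw [mul_smul_comm, ← word_cons]
  have e1 : (∑ a ∈ Finset.range (m-1),
        ((-1:ℤ)^a) • (Sel k (pno (a+1)) * word k [pno (m-1-a)]))
      = ∑ p ∈ (Finset.range (m-1)).sigma (fun a => Finset.range a),
          ((-1:ℤ)^(p.1+p.2)) • word k [pno (p.2+1), pno (p.1-p.2), pno (m-1-p.1)] := by
    rw [Finset.sum_sigma]
    apply Finset.sum_congr rfl
    intro a ha
    rw [hsel a ha, Finset.smul_sum]
    apply Finset.sum_congr rfl
    intro i hi
    rw [smul_smul, ← pow_add]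
  have e2 : (∑ a ∈ Finset.range (m-1), word k [pno (a+1)] * Sel k (pno (m-1-a)))
      = ∑ p ∈ (Finset.range (m-1)).sigma (fun a => Finset.range (m-2-a)),
          ((-1:ℤ)^(p.2)) • word k [pno (p.1+1), pno (p.2+1), pno (m-2-p.1-p.2)] := by
    rw [Finset.sum_sigma]
    exact Finset.sum_congr rfl hsel2
  have e3 : (∑ p ∈ (Finset.range (m-1)).sigma (fun a => Finset.range a),
          ((-1:ℤ)^(p.1+p.2)) • word k [pno (p.2+1), pno (p.1-p.2), pno (m-1-p.1)])
      = ∑ p ∈ (Finset.range (m-1)).sigma (fun a => Finset.range (m-2-a)),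
          (-(((-1:ℤ)^(p.2)) • word k [pno (p.1+1), pno (p.2+1), pno (m-2-p.1-p.2)])) := by
    apply Finset.sum_nbij' (i := fun p => ⟨p.2, p.1-1-p.2⟩) (j := fun p => ⟨p.1+p.2+1, p.1⟩)
    · intro p hp
      obtain ⟨a, b⟩ := p
      simp only [Finset.mem_sigma, Finset.mem_range] at hp ⊢
      omega
    · intro p hp
      obtain ⟨a, b⟩ := p
      simp only [Finset.mem_sigma, Finset.mem_range] at hp ⊢
      omega
    · intro p hp
      obtain ⟨a, b⟩ := p
      simp only [Finset.mem_sigma, Finset.mem_range] at hp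
      show (⟨b + (a-1-b) + 1, b⟩ : (_ : ℕ) × ℕ) = ⟨a, b⟩
      rw [show b + (a-1-b) + 1 = a from by omega]
    · intro p hp
      obtain ⟨a, b⟩ := p
      simp only [Finset.mem_sigma, Finset.mem_range] at hp
      show (⟨a, a + b + 1 - 1 - a⟩ : (_ : ℕ) × ℕ) = ⟨a, b⟩
      rw [show a + b + 1 - 1 - a = b from by omega]
    · intro p hp
      obtain ⟨a, b⟩ := p
      simp only [Finset.mem_sigma, Finset.mem_range] at hp
      simp only
      rw [show a - 1 - b + 1 = a - b from by omega,
        show m - 2 - b - (a - 1 - b) = m - 1 - a from by omega]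
      have hsign : ((-1:ℤ))^(a+b) = -((-1:ℤ)^(a-1-b)) := by
        have hd : a + b = (a-1-b) + (2*b+1) := by omega
        rw [hd, pow_add]
        have h5 : ((-1:ℤ))^(2*b+1) = -1 := Odd.neg_one_pow ⟨b, by ring⟩
        rw [h5]; ring
      rw [hsign, neg_smul]
  rw [e1, e2, e3, Finset.sum_neg_distrib, neg_add_cancel]

end KEY
end QI
namespace QI
noncomputable section IDEAL
variable (k : Type u) [CommRing k]

theorem gen_S_mem (n : ℕ∞) (m : ℕ+) (hm : n ≤ ((m:ℕ) : ℕ∞)) (a b : Cinf k) :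
    a * Sel k m * b ∈ IsubE k n :=
  Submodule.subset_span ⟨a, b, m, hm, Or.inl rfl⟩

theorem gen_d_mem (n : ℕ∞) (m : ℕ+) (hm : n ≤ ((m:ℕ) : ℕ∞)) (a b : Cinf k) :
    a * word k [m] * b ∈ IsubE k n :=
  Submodule.subset_span ⟨a, b, m, hm, Or.inr rfl⟩

theorem reduce_words {S : Submodule k (Cinf k)} (F : Cinf k →ₗ[k] Cinf k) (g : Cinf k)
    (h : ∀ u v : List ℕ+, F (word k u * g * word k v) ∈ S) :
    ∀ a b : Cinf k, F (a * g * b) ∈ S := by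
  have inner : ∀ (u : List ℕ+) (b : Cinf k), F (word k u * g * b) ∈ S := by
    intro u b
    induction b using MonoidAlgebra.induction_linear with
    | zero => rw [mul_zero, map_zero]; exact zero_mem S
    | add x y hx hy => rw [mul_add, map_add]; exact add_mem hx hy
    | single w c =>
      rw [show (MonoidAlgebra.single w c : Cinf k) = c • word k w.toList from single_eq_smul_word k w c,
        mul_smul_comm, map_smul]
      exact Submodule.smul_mem S c (h u w.toList)
  intro a b
  induction a using MonoidAlgebra.induction_linear with
  | zero => rw [zero_mul, zero_mul, map_zero]; exact zero_mem S
  | add x y hx hy => rw [add_mul, add_mul, map_add]; exact add_mem hx hy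
  | single w c =>
    rw [show (MonoidAlgebra.single w c : Cinf k) = c • word k w.toList from single_eq_smul_word k w c,
      smul_mul_assoc, smul_mul_assoc, map_smul]
    exact Submodule.smul_mem S c (inner w.toList b)

theorem hpow2 : ∀ b : ℕ, ((-1:ℤ))^(b*2) = 1 := fun b => by
  rw [mul_comm, pow_mul]; norm_num

theorem delta0_word_d_word (m : ℕ+) (u v : List ℕ+) :
    delta0 k (word k u * word k [m] * word k v)
      = deltaWord k u * word k [m] * word k v
        + ((-1:ℤ) ^ (wt u)) • (word k u * Sel k m * word k v)
        + ((-1:ℤ) ^ (wt u + (m:ℕ) + 1)) • (word k u * word k [m] * deltaWord k v) := by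
  rw [← word_append, ← word_append, delta0_word, deltaWord_append, deltaWord_append k u [m],
    deltaWord_singleton, wt_append, word_append]
  have hw : wt [m] = (m:ℕ) + 1 := by simp [wt_cons, wt_nil]
  rw [hw]
  simp only [mul_add, add_mul, smul_add, smul_mul_assoc, mul_smul_comm, smul_smul, mul_assoc,
    pow_add]
  try match_scalars <;> (try ring) <;> simp [hpow2]

theorem delta0_word_pair_word (x y : ℕ+) (u v : List ℕ+) :
    delta0 k (word k u * word k [x, y] * word k v)
      = deltaWord k u * word k [x, y] * word k v
        + ((-1:ℤ) ^ (wt u)) • (word k u * (Sel k x * word k [y]) * word k v)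
        + ((-1:ℤ) ^ (wt u + (x:ℕ) + 1)) • (word k u * (word k [x] * Sel k y) * word k v)
        + ((-1:ℤ) ^ (wt u + (x:ℕ) + (y:ℕ))) • (word k u * word k [x, y] * deltaWord k v) := by
  rw [← word_append, ← word_append, delta0_word, deltaWord_append, deltaWord_append k u [x,y],
    deltaWord_pair, wt_append, word_append]
  have hw : wt [x, y] = (x:ℕ) + (y:ℕ) + 2 := by simp [wt_cons, wt_nil]; ring
  rw [hw]
  simp only [mul_add, add_mul, smul_add, smul_mul_assoc, mul_smul_comm, smul_smul, mul_assoc,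
    pow_add]
  try match_scalars <;> (try ring) <;> simp [hpow2]

theorem delta0_word_S_word (m : ℕ+) (u v : List ℕ+) :
    delta0 k (word k u * Sel k m * word k v)
      = deltaWord k u * Sel k m * word k v
        + ((-1:ℤ) ^ (wt u + (m:ℕ))) • (word k u * Sel k m * deltaWord k v) := by
  have key := key_identity k (m:ℕ)
  calc delta0 k (word k u * Sel k m * word k v)
      = ∑ a ∈ Finset.range ((m:ℕ)-1), ((-1:ℤ)^a) •
          delta0 k (word k u * word k [pno (a+1), pno ((m:ℕ)-1-a)] * word k v) := by
        conv_lhs => rw [sel_eq]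
        rw [Finset.mul_sum, Finset.sum_mul, map_sum]
        apply Finset.sum_congr rfl
        intro a ha
        rw [mul_smul_comm, smul_mul_assoc, map_zsmul]
    _ = ∑ a ∈ Finset.range ((m:ℕ)-1),
          ( ((-1:ℤ)^a) • (deltaWord k u * word k [pno (a+1), pno ((m:ℕ)-1-a)] * word k v)
            + ((-1:ℤ)^(wt u)) • (word k u *
                ( ((-1:ℤ)^a) • (Sel k (pno (a+1)) * word k [pno ((m:ℕ)-1-a)])
                  + word k [pno (a+1)] * Sel k (pno ((m:ℕ)-1-a)) ) * word k v)
            + ((-1:ℤ)^(wt u + (m:ℕ))) • (((-1:ℤ)^a) •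
                (word k u * word k [pno (a+1), pno ((m:ℕ)-1-a)] * deltaWord k v)) ) := by
        apply Finset.sum_congr rfl
        intro a ha
        rw [Finset.mem_range] at ha
        rw [delta0_word_pair_word]
        rw [pno_coe (a+1) (by omega), pno_coe ((m:ℕ)-1-a) (by omega)]
        have h1 : wt u + (a+1) + ((m:ℕ)-1-a) = wt u + (m:ℕ) := by omega
        rw [h1]
        simp only [mul_add, add_mul, smul_add, smul_mul_assoc, mul_smul_comm, smul_smul,
          mul_assoc, pow_add]
        try match_scalars <;> (try ring) <;> simp [hpow2]
    _ = deltaWord k u * Sel k m * word k v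
        + ((-1:ℤ)^(wt u)) • (word k u *
            ( ∑ a ∈ Finset.range ((m:ℕ)-1),
              ( ((-1:ℤ)^a) • (Sel k (pno (a+1)) * word k [pno ((m:ℕ)-1-a)])
                + word k [pno (a+1)] * Sel k (pno ((m:ℕ)-1-a)) ) ) * word k v)
        + ((-1:ℤ)^(wt u + (m:ℕ))) • (word k u * Sel k m * deltaWord k v) := by
        rw [Finset.sum_add_distrib, Finset.sum_add_distrib]
        have hA : (∑ a ∈ Finset.range ((m:ℕ)-1), ((-1:ℤ)^a) •
              (deltaWord k u * word k [pno (a+1), pno ((m:ℕ)-1-a)] * word k v))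
            = deltaWord k u * Sel k m * word k v := by
          conv_rhs => rw [sel_eq]
          rw [Finset.mul_sum, Finset.sum_mul]
          exact Finset.sum_congr rfl fun a _ => by rw [mul_smul_comm, smul_mul_assoc]
        have hB : (∑ a ∈ Finset.range ((m:ℕ)-1), ((-1:ℤ)^(wt u)) • (word k u *
              ( ((-1:ℤ)^a) • (Sel k (pno (a+1)) * word k [pno ((m:ℕ)-1-a)])
                + word k [pno (a+1)] * Sel k (pno ((m:ℕ)-1-a)) ) * word k v))
            = ((-1:ℤ)^(wt u)) • (word k u *
              ( ∑ a ∈ Finset.range ((m:ℕ)-1),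
                ( ((-1:ℤ)^a) • (Sel k (pno (a+1)) * word k [pno ((m:ℕ)-1-a)])
                  + word k [pno (a+1)] * Sel k (pno ((m:ℕ)-1-a)) ) ) * word k v) := by
          rw [Finset.mul_sum, Finset.sum_mul, Finset.smul_sum]
        have hC : (∑ a ∈ Finset.range ((m:ℕ)-1), ((-1:ℤ)^(wt u + (m:ℕ))) • (((-1:ℤ)^a) •
              (word k u * word k [pno (a+1), pno ((m:ℕ)-1-a)] * deltaWord k v)))
            = ((-1:ℤ)^(wt u + (m:ℕ))) • (word k u * Sel k m * deltaWord k v) := by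
          rw [← Finset.smul_sum]
          congr 1
          conv_rhs => rw [sel_eq]
          rw [Finset.mul_sum, Finset.sum_mul]
          exact Finset.sum_congr rfl fun a _ => by rw [mul_smul_comm, smul_mul_assoc]
        rw [hA, hB, hC]
    _ = deltaWord k u * Sel k m * word k v
        + ((-1:ℤ) ^ (wt u + (m:ℕ))) • (word k u * Sel k m * deltaWord k v) := by
        rw [Finset.sum_add_distrib, key, mul_zero, zero_mul, smul_zero, add_zero]

theorem delta0_presIdeal (n : ℕ∞) : ∀ x ∈ IsubE k n, delta0 k x ∈ IsubE k n := by
  intro x hx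
  refine Submodule.span_induction ?_ ?_ ?_ ?_ hx
  · rintro y ⟨a, b, m, hm, (rfl|rfl)⟩
    · refine reduce_words k (delta0 k) (Sel k m) (fun u v => ?_) a b
      rw [delta0_word_S_word]
      exact add_mem (gen_S_mem k n m hm _ _) (zsmul_mem (gen_S_mem k n m hm _ _) _)
    · refine reduce_words k (delta0 k) (word k [m]) (fun u v => ?_) a b
      rw [delta0_word_d_word]
      exact add_mem (add_mem (gen_d_mem k n m hm _ _)
        (zsmul_mem (gen_S_mem k n m hm _ _) _)) (zsmul_mem (gen_d_mem k n m hm _ _) _)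
  · rw [map_zero]; exact zero_mem _
  · intro x y _ _ hx hy; rw [map_add]; exact add_mem hx hy
  · intro c x _ hx; rw [map_smul]; exact Submodule.smul_mem _ c hx

end IDEAL
end QI
namespace QI
noncomputable section HMAP
variable (k : Type u) [CommRing k]

/-- `T` on words: `T(1)=0`, `T(d_c w) = d_{c+1} w`. -/
def TWord : List ℕ+ → Cinf k
  | [] => 0
  | c :: r => word k ((c + 1) :: r)

/-- The shift operator `T`. -/
def Tmap : Cinf k →ₗ[k] Cinf k :=
  (Finsupp.lift (Cinf k) k (FreeMonoid ℕ+)) (fun w => TWord k w.toList) ∘ₗ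
    (MonoidAlgebra.coeffLinearEquiv k).toLinearMap

theorem Tmap_word (w : List ℕ+) : Tmap k (word k w) = TWord k w := by
  unfold Tmap word
  rw [MonoidAlgebra.of_apply]
  show (Finsupp.lift (Cinf k) k (FreeMonoid ℕ+) _) (Finsupp.single (FreeMonoid.ofList w) (1:k)) = _
  erw [Finsupp.lift_apply, Finsupp.sum_single_index (by simp)]
  rw [one_smul, FreeMonoid.toList_ofList]

theorem hmap_one_mul (x : Cinf k) : hmap k (word k [1] * x) = Tmap k x := by
  have h := eq_on_words k ((hmap k).comp (LinearMap.mulLeft k (word k [1]))) (Tmap k) ?_ x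
  · simpa using h
  · intro w
    simp only [LinearMap.comp_apply, LinearMap.mulLeft_apply]
    rw [← word_append, hmap_word, Tmap_word]
    cases w with
    | nil => simp [hWord, TWord]
    | cons c r => simp [hWord, TWord]

theorem hmap_ne_one_mul (i : ℕ+) (hi : i ≠ 1) (x : Cinf k) : hmap k (word k [i] * x) = 0 := by
  have h := eq_on_words k ((hmap k).comp (LinearMap.mulLeft k (word k [i]))) 0 ?_ x
  · simpa using h
  · intro w
    simp only [LinearMap.comp_apply, LinearMap.mulLeft_apply, LinearMap.zero_apply]
    rw [← word_append, hmap_word]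
    cases w with
    | nil => simp [hWord]
    | cons c r => simp [hWord, hi]

theorem hmap_cons2_one_mul (j : ℕ+) (u : List ℕ+) (x : Cinf k) :
    hmap k (word k (1 :: j :: u) * x) = word k ((j + 1) :: u) * x := by
  have h := eq_on_words k ((hmap k).comp (LinearMap.mulLeft k (word k (1 :: j :: u))))
    (LinearMap.mulLeft k (word k ((j + 1) :: u))) ?_ x
  · simpa using h
  · intro w
    simp only [LinearMap.comp_apply, LinearMap.mulLeft_apply]
    rw [← word_append, ← word_append, hmap_word]
    simp [hWord]

theorem hmap_cons2_ne_mul (i j : ℕ+) (hi : i ≠ 1) (u : List ℕ+) (x : Cinf k) :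
    hmap k (word k (i :: j :: u) * x) = 0 := by
  have h := eq_on_words k ((hmap k).comp (LinearMap.mulLeft k (word k (i :: j :: u)))) 0 ?_ x
  · simpa using h
  · intro w
    simp only [LinearMap.comp_apply, LinearMap.mulLeft_apply, LinearMap.zero_apply]
    rw [← word_append, hmap_word]
    simp [hWord, hi]

theorem Tmap_cons_mul (c : ℕ+) (r : List ℕ+) (x : Cinf k) :
    Tmap k (word k (c :: r) * x) = word k ((c + 1) :: r) * x := by
  have h := eq_on_words k ((Tmap k).comp (LinearMap.mulLeft k (word k (c :: r))))
    (LinearMap.mulLeft k (word k ((c + 1) :: r))) ?_ x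
  · simpa using h
  · intro w
    simp only [LinearMap.comp_apply, LinearMap.mulLeft_apply]
    rw [← word_append, ← word_append, Tmap_word]
    simp [TWord]

theorem pno_one (a : ℕ) (h : a = 1) : pno a = 1 := by
  exact Subtype.ext (by simp [pno, h])

theorem pno_ne_one (a : ℕ) (h : 2 ≤ a) : pno a ≠ 1 := by
  intro hc
  have := congrArg (fun x : ℕ+ => (x : ℕ)) hc
  simp [pno] at this
  omega

theorem hmap_S_mul (m : ℕ+) (hm : 2 ≤ (m:ℕ)) (x : Cinf k) :
    hmap k (Sel k m * x) = word k [m] * x := by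
  rw [sel_eq, Finset.sum_mul, map_sum]
  have hterm : ∀ a ∈ Finset.range ((m:ℕ)-1),
      hmap k ((((-1:ℤ)^a) • word k [pno (a+1), pno ((m:ℕ)-1-a)]) * x)
        = if a = 0 then word k [m] * x else 0 := by
    intro a ha
    rw [Finset.mem_range] at ha
    rw [smul_mul_assoc, map_zsmul]
    by_cases h0 : a = 0
    · subst h0
      rw [if_pos rfl, pow_zero, one_smul, show pno (0+1) = 1 from pno_one 1 rfl, word_cons,
        mul_assoc, hmap_one_mul, Tmap_cons_mul]
      have he : pno ((m:ℕ)-1-0) + 1 = m := by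
        rw [← PNat.coe_inj, PNat.add_coe, PNat.one_coe]
        simp [pno, PNat.mk_coe]
        omega
      rw [he]
    · rw [if_neg h0, word_cons, mul_assoc,
        hmap_ne_one_mul k (pno (a+1)) (pno_ne_one _ (by omega)), smul_zero]
  rw [Finset.sum_congr rfl hterm,
    Finset.sum_ite_eq' (Finset.range ((m:ℕ)-1)) 0 (fun _ => word k [m] * x)]
  rw [if_pos (by rw [Finset.mem_range]; omega)]

theorem Tmap_S_mul (m : ℕ+) (x : Cinf k) :
    Tmap k (Sel k m * x) = word k [1, m] * x - Sel k (m+1) * x := by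
  obtain ⟨M, hM⟩ : ∃ M, (m:ℕ) = M + 1 := ⟨(m:ℕ)-1, by have := m.pos; omega⟩
  have expand_left : Tmap k (Sel k m * x)
      = ∑ a ∈ Finset.range M, ((-1:ℤ)^a) • (word k ((pno (a+1) + 1) :: [pno (M-a)]) * x) := by
    rw [sel_eq, Finset.sum_mul, map_sum, show ((m:ℕ)) - 1 = M from by omega]
    apply Finset.sum_congr rfl
    intro a ha
    rw [smul_mul_assoc, map_zsmul, Tmap_cons_mul]
  have expand_right : Sel k (m+1) * x
      = word k [1, m] * x
        + ∑ a ∈ Finset.range M, (-((-1:ℤ)^a)) • (word k ((pno (a+1) + 1) :: [pno (M-a)]) * x) := by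
    rw [sel_eq, Finset.sum_mul]
    rw [show ((m+1 : ℕ+):ℕ) - 1 = M + 1 from by rw [PNat.add_coe, PNat.one_coe]; omega]
    rw [Finset.sum_range_succ']
    conv_lhs => rw [add_comm]
    congr 1
    · rw [pow_zero, one_smul, show pno (0+1) = 1 from pno_one _ rfl,
        show pno (M+1-0) = m from PNat.coe_inj.mp (by simp [pno, PNat.mk_coe]; omega)]
    · apply Finset.sum_congr rfl
      intro a ha
      rw [Finset.mem_range] at ha
      have hsgn : ((-1:ℤ))^(a+1) = -((-1:ℤ)^a) := by rw [pow_succ]; ring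
      rw [smul_mul_assoc, show M + 1 - (a+1) = M - a from by omega,
        show pno (a+1+1) = pno (a+1) + 1 from
          PNat.coe_inj.mp (by rw [PNat.add_coe, PNat.one_coe]; simp [pno, PNat.mk_coe]), hsgn]
  rw [expand_left, expand_right, sub_add_cancel_left, ← Finset.sum_neg_distrib]
  apply Finset.sum_congr rfl
  intro a ha
  rw [neg_smul, neg_neg]

end HMAP
end QI
namespace QI
noncomputable section PRES
variable (k : Type u) [CommRing k]

theorem two_le_coe {n : ℕ∞} {m : ℕ+} (hn : 2 ≤ n) (hm : n ≤ ((m:ℕ) : ℕ∞)) : 2 ≤ (m:ℕ) := by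
  have h := le_trans hn hm
  exact_mod_cast h

theorem pnat_ne_one {m : ℕ+} (hm : 2 ≤ (m:ℕ)) : m ≠ 1 := by
  intro h
  rw [h] at hm
  simp [PNat.one_coe] at hm

theorem le_succ_coe {n : ℕ∞} {m : ℕ+} (hm : n ≤ ((m:ℕ) : ℕ∞)) :
    n ≤ (((m+1 : ℕ+) : ℕ) : ℕ∞) := by
  refine le_trans hm ?_
  rw [PNat.add_coe, PNat.one_coe]
  exact_mod_cast Nat.le_succ (m:ℕ)

theorem hmap_word_S_word (n : ℕ∞) (hn : 2 ≤ n) (m : ℕ+) (hm : n ≤ ((m:ℕ) : ℕ∞))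
    (u v : List ℕ+) : hmap k (word k u * Sel k m * word k v) ∈ IsubE k n := by
  have hm2 : 2 ≤ (m:ℕ) := two_le_coe hn hm
  match u with
  | [] =>
    rw [word_nil, one_mul, hmap_S_mul k m hm2]
    rw [← one_mul (word k [m])]
    exact gen_d_mem k n m hm 1 (word k v)
  | [i] =>
    by_cases hi : i = 1
    · subst hi
      rw [mul_assoc, hmap_one_mul, Tmap_S_mul]
      refine sub_mem ?_ ?_
      · rw [word_cons, mul_assoc, ← mul_assoc (word k [1])]
        exact gen_d_mem k n m hm (word k [1]) (word k v)
      · rw [← one_mul (Sel k (m+1)), mul_assoc, ← mul_assoc]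
        exact gen_S_mem k n (m+1) (le_succ_coe hm) 1 (word k v)
    · rw [mul_assoc, hmap_ne_one_mul k i hi]
      exact zero_mem _
  | i :: j :: u' =>
    by_cases hi : i = 1
    · subst hi
      rw [mul_assoc, hmap_cons2_one_mul, ← mul_assoc]
      exact gen_S_mem k n m hm _ _
    · rw [mul_assoc, hmap_cons2_ne_mul k i j hi]
      exact zero_mem _

theorem hmap_word_d_word (n : ℕ∞) (hn : 2 ≤ n) (m : ℕ+) (hm : n ≤ ((m:ℕ) : ℕ∞))
    (u v : List ℕ+) : hmap k (word k u * word k [m] * word k v) ∈ IsubE k n := by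
  have hm2 : 2 ≤ (m:ℕ) := two_le_coe hn hm
  match u with
  | [] =>
    rw [word_nil, one_mul, hmap_ne_one_mul k m (pnat_ne_one hm2)]
    exact zero_mem _
  | [i] =>
    have hjoin : word k [i] * word k [m] = word k (i :: m :: []) :=
      (word_cons k i [m]).symm
    rw [hjoin]
    by_cases hi : i = 1
    · subst hi
      rw [hmap_cons2_one_mul]
      rw [← one_mul (word k ((m+1) :: []))]
      exact gen_d_mem k n (m+1) (le_succ_coe hm) 1 (word k v)
    · rw [hmap_cons2_ne_mul k i m hi]
      exact zero_mem _
  | i :: j :: u' =>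
    by_cases hi : i = 1
    · subst hi
      rw [mul_assoc, hmap_cons2_one_mul, ← mul_assoc]
      exact gen_d_mem k n m hm _ _
    · rw [mul_assoc, hmap_cons2_ne_mul k i j hi]
      exact zero_mem _

theorem hmap_presIdeal (n : ℕ∞) (hn : 2 ≤ n) : ∀ x ∈ IsubE k n, hmap k x ∈ IsubE k n := by
  intro x hx
  refine Submodule.span_induction ?_ ?_ ?_ ?_ hx
  · rintro y ⟨a, b, m, hm, (rfl|rfl)⟩
    · exact reduce_words k (hmap k) (Sel k m) (hmap_word_S_word k n hn m hm) a b
    · exact reduce_words k (hmap k) (word k [m]) (hmap_word_d_word k n hn m hm) a b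
  · rw [map_zero]; exact zero_mem _
  · intro x y _ _ hx hy; rw [map_add]; exact add_mem hx hy
  · intro c x _ hx; rw [map_smul]; exact Submodule.smul_mem _ c hx

/-- `P` on words: projection onto the span of `1` and `d_1`. -/
def pW (w : List ℕ+) : Cinf k := if w = [] ∨ w = [1] then word k w else 0

/-- The projection `P`. -/
def Pmap : Cinf k →ₗ[k] Cinf k :=
  (Finsupp.lift (Cinf k) k (FreeMonoid ℕ+)) (fun w => pW k w.toList) ∘ₗ
    (MonoidAlgebra.coeffLinearEquiv k).toLinearMap

theorem Pmap_word (w : List ℕ+) : Pmap k (word k w) = pW k w := by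
  unfold Pmap word
  rw [MonoidAlgebra.of_apply]
  show (Finsupp.lift (Cinf k) k (FreeMonoid ℕ+) _) (Finsupp.single (FreeMonoid.ofList w) (1:k)) = _
  erw [Finsupp.lift_apply, Finsupp.sum_single_index (by simp)]
  rw [one_smul, FreeMonoid.toList_ofList]

theorem pW_big (w : List ℕ+) (h : 2 ≤ w.length) : pW k w = 0 := by
  unfold pW
  rw [if_neg]
  rintro (rfl | rfl) <;> simp at h

theorem Pmap_word_S_word (m : ℕ+) (u v : List ℕ+) :
    Pmap k (word k u * Sel k m * word k v) = 0 := by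
  rw [sel_eq, Finset.mul_sum, Finset.sum_mul, map_sum]
  apply Finset.sum_eq_zero
  intro a ha
  rw [mul_smul_comm, smul_mul_assoc, map_zsmul]
  rw [← word_append, ← word_append, Pmap_word, pW_big]
  · rw [smul_zero]
  · simp
    omega

theorem Pmap_word_d_word (n : ℕ∞) (hn : 2 ≤ n) (m : ℕ+) (hm : n ≤ ((m:ℕ) : ℕ∞))
    (u v : List ℕ+) : Pmap k (word k u * word k [m] * word k v) = 0 := by
  have hm2 : 2 ≤ (m:ℕ) := two_le_coe hn hm
  rw [← word_append, ← word_append, Pmap_word]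
  have hnc : ¬(u ++ [m] ++ v = [] ∨ u ++ [m] ++ v = [1]) := by
    rintro (h | h)
    · simp at h
    · have hlen := congrArg List.length h
      simp at hlen
      have hu : u = [] := List.eq_nil_of_length_eq_zero (by omega)
      have hv : v = [] := List.eq_nil_of_length_eq_zero (by omega)
      subst hu; subst hv
      simp at h
      exact pnat_ne_one hm2 h
  unfold pW
  rw [if_neg hnc]

theorem Pmap_presIdeal (n : ℕ∞) (hn : 2 ≤ n) : ∀ x ∈ IsubE k n, Pmap k x = 0 := by
  intro x hx
  have : ∀ y ∈ IsubE k n, Pmap k y ∈ (⊥ : Submodule k (Cinf k)) := by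
    intro y hy
    refine Submodule.span_induction ?_ ?_ ?_ ?_ hy
    · rintro z ⟨a, b, m, hm, (rfl|rfl)⟩
      · refine reduce_words k (Pmap k) (Sel k m) (fun u v => ?_) a b
        rw [Pmap_word_S_word]; exact zero_mem _
      · refine reduce_words k (Pmap k) (word k [m]) (fun u v => ?_) a b
        rw [Pmap_word_d_word k n hn m hm]; exact zero_mem _
    · rw [map_zero]; exact zero_mem _
    · intro x y _ _ hx hy; rw [map_add]; exact add_mem hx hy
    · intro c x _ hx; rw [map_smul]; exact Submodule.smul_mem _ c hx
  simpa using this x hx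

theorem Pmap_deltaWord (w : List ℕ+) : Pmap k (deltaWord k w) = 0 := by
  rw [deltaWord_eq, map_sum]
  apply Finset.sum_eq_zero
  intro j hj
  rw [map_zsmul, Pmap_word_S_word, smul_zero]

theorem Pmap_delta0 (x : Cinf k) : Pmap k (delta0 k x) = 0 := by
  have h := eq_on_words k ((Pmap k).comp (delta0 k)) 0 ?_ x
  · simpa using h
  · intro w
    simp only [LinearMap.comp_apply, LinearMap.zero_apply]
    rw [delta0_word, Pmap_deltaWord]

theorem delta0_Pmap (x : Cinf k) : delta0 k (Pmap k x) = 0 := by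
  have h := eq_on_words k ((delta0 k).comp (Pmap k)) 0 ?_ x
  · simpa using h
  · intro w
    simp only [LinearMap.comp_apply, LinearMap.zero_apply]
    rw [Pmap_word]
    unfold pW
    split_ifs with h
    · rcases h with rfl | rfl
      · rw [delta0_word, deltaWord_nil]
      · rw [delta0_word, deltaWord_singleton, Sel_one]
    · rw [map_zero]

end PRES
end QI
namespace QI
noncomputable section HOMOTOPY
variable (k : Type u) [CommRing k]

theorem pnat_two_le {i : ℕ+} (hi : i ≠ 1) : 2 ≤ (i:ℕ) := by
  have h1 := i.pos
  by_contra h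
  push_neg at h
  have h2 : (i:ℕ) = 1 := by omega
  exact hi (PNat.coe_inj.mp (h2.trans PNat.one_coe.symm))

theorem homotopy (x : Cinf k) :
    delta0 k (hmap k x) + hmap k (delta0 k x) = x - Pmap k x := by
  have h := eq_on_words k ((delta0 k).comp (hmap k) + (hmap k).comp (delta0 k))
    (LinearMap.id - Pmap k) ?_ x
  · simpa using h
  · intro w
    simp only [LinearMap.add_apply, LinearMap.comp_apply, LinearMap.sub_apply,
      LinearMap.id_apply]
    rw [hmap_word, delta0_word, Pmap_word]
    match w with
    | [] => simp [hWord, pW, deltaWord_nil]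
    | [i] =>
      by_cases hi : i = 1
      · subst hi
        simp [hWord, pW, deltaWord_singleton, Sel_one]
      · rw [deltaWord_singleton, ← mul_one (Sel k i), hmap_S_mul k i (pnat_two_le hi), mul_one]
        simp [hWord, pW, hi]
    | i :: j :: t =>
      have hlen : pW k (i::j::t) = 0 := pW_big k _ (by simp)
      by_cases hi : i = 1
      · subst hi
        rw [hlen, sub_zero]
        rw [show hWord k (1::j::t) = word k ((j+1)::t) from by simp [hWord]]
        rw [deltaWord_cons k 1 (j::t), Sel_one, zero_mul, zero_add, PNat.one_coe]
        rw [show ((-1:ℤ))^(1+1) = 1 from by norm_num, one_smul]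
        rw [hmap_one_mul]
        rw [deltaWord_cons k j t, map_add, map_zsmul, Tmap_S_mul, Tmap_cons_mul]
        rw [delta0_word, deltaWord_cons k (j+1) t]
        rw [PNat.add_coe, PNat.one_coe]
        rw [show ((1:ℕ+)::j::t) = [1, j] ++ t from rfl, word_append]
        simp only [mul_add, add_mul, smul_add, sub_eq_add_neg, smul_smul, smul_mul_assoc,
          mul_smul_comm, mul_assoc, pow_add]
        try match_scalars <;> (try ring) <;> simp [hpow2]
      · rw [hlen, sub_zero]
        rw [show hWord k (i::j::t) = 0 from by simp [hWord, hi], map_zero, zero_add]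
        rw [deltaWord_cons k i (j::t), map_add, map_zsmul]
        rw [hmap_S_mul k i (pnat_two_le hi)]
        rw [hmap_ne_one_mul k i hi, smul_zero, add_zero]
        rw [← word_cons]

end HOMOTOPY
end QI
namespace QI
noncomputable section DEG
variable (k : Type u) [CommRing k]

instance : DecidableEq (FreeMonoid ℕ+) := inferInstanceAs (DecidableEq (List ℕ+))

theorem support_lift (f : FreeMonoid ℕ+ → Cinf k) (x : Cinf k) :
    ((((Finsupp.lift (Cinf k) k (FreeMonoid ℕ+)) f x.coeff : Cinf k)).coeff).support
      ⊆ (x.coeff).support.biUnion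
          (fun w => ((f w : Cinf k).coeff).support) := by
  classical
  intro a ha
  erw [Finsupp.lift_apply] at ha
  rw [MonoidAlgebra.coeff_finsuppSum] at ha
  have ha' := Finsupp.support_sum ha
  rw [Finset.mem_biUnion] at ha' ⊢
  obtain ⟨w, hw, hmem⟩ := ha'
  exact ⟨w, hw, Finsupp.support_smul (b := x.coeff w) (g := (f w).coeff) hmem⟩

theorem isHomog_of_subset {p q : ℤ} {x y : Cinf k}
    (h : (y.coeff).support ⊆ (x.coeff).support)
    (hx : IsHomog k p q x) : IsHomog k p q y :=
  fun w hw => hx w (h hw)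

theorem isHomog_neg {p q : ℤ} {x : Cinf k} (hx : IsHomog k p q x) : IsHomog k p q (-x) := by
  refine isHomog_of_subset k ?_ hx
  intro a ha
  rw [MonoidAlgebra.coeff_neg, Finsupp.support_neg] at ha
  exact ha

theorem support_Pmap (x : Cinf k) :
    ((Pmap k x : Cinf k).coeff).support ⊆ (x.coeff).support := by
  intro a ha
  have h := support_lift k (fun w => pW k w.toList) x ha
  rw [Finset.mem_biUnion] at h
  obtain ⟨u, hu, hmem⟩ := h
  have hsub : ((pW k u.toList : Cinf k).coeff).support ⊆ {u} := by
    unfold pW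
    split_ifs with hc
    · intro b hb
      unfold word at hb
      rw [MonoidAlgebra.of_apply, MonoidAlgebra.coeff_single] at hb
      have h2 := Finsupp.support_single_subset hb
      rw [FreeMonoid.ofList_toList] at h2
      exact h2
    · simp
  have := hsub hmem
  rw [Finset.mem_singleton] at this
  rw [this]
  exact hu

theorem isHomog_Pmap {p q : ℤ} {x : Cinf k} (hx : IsHomog k p q x) :
    IsHomog k p q (Pmap k x) :=
  isHomog_of_subset k (support_Pmap k x) hx

theorem wordDeg_shift (j : ℕ+) (t : List ℕ+) (p q : ℤ)
    (h : wordDeg ((1:ℕ+)::j::t) = (p, q)) : wordDeg ((j+1)::t) = (p, q-1) := by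
  simp [wordDeg, Prod.ext_iff] at h ⊢
  obtain ⟨h1, h2⟩ := h
  constructor <;> omega

theorem isHomog_hmap {p q : ℤ} {x : Cinf k} (hx : IsHomog k p q x) :
    IsHomog k p (q-1) (hmap k x) := by
  intro w hw
  have hw' := support_lift k (fun w => hWord k w.toList) x hw
  rw [Finset.mem_biUnion] at hw'
  obtain ⟨u, hu, hmem'⟩ := hw'
  have hmem : w ∈ ((hWord k u.toList : Cinf k).coeff).support := hmem'
  have hdeg := hx u hu
  rcases hlist : u.toList with _ | ⟨i, _ | ⟨j, t⟩⟩
  · rw [hlist] at hmem; simp [hWord] at hmem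
  · rw [hlist] at hmem; simp [hWord] at hmem
  · rw [hlist] at hmem
    by_cases hi : i = 1
    · subst hi
      rw [show hWord k (1::j::t) = word k ((j+1)::t) from by simp [hWord]] at hmem
      unfold word at hmem
      rw [MonoidAlgebra.of_apply, MonoidAlgebra.coeff_single] at hmem
      have h2 := Finsupp.support_single_subset hmem
      rw [Finset.mem_singleton] at h2
      rw [hlist] at hdeg
      rw [h2, FreeMonoid.toList_ofList]
      exact wordDeg_shift j t p q hdeg
    · rw [show hWord k (i::j::t) = 0 from by simp [hWord, hi]] at hmem
      simp at hmem

end DEG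
end QI
namespace QI
noncomputable section QUOT
variable (k : Type u) [CommRing k]

theorem CnMk_eq_zero (n : ℕ∞) (x : Cinf k) : CnMk k n x = 0 ↔ x ∈ IsubE k n :=
  Submodule.Quotient.mk_eq_zero _

theorem CnMk_eq_iff (n : ℕ∞) (x y : Cinf k) :
    CnMk k n x = CnMk k n y ↔ x - y ∈ IsubE k n :=
  Submodule.Quotient.eq _

theorem PhiMap_mk (n l : ℕ∞) (h : n ≤ l) (x : Cinf k) :
    PhiMap k n l h (CnMk k l x) = CnMk k n x :=
  Submodule.mapQ_apply _ _ LinearMap.id x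

end QUOT
end QI

/-- `δ_0` preserves each ideal `I_n`, and for the induced differentials
`D n` on `C_n = C_∞/I_n`, the natural surjection `Φ_{l,n} : C_l → C_n` induces an
isomorphism on `δ_0`-cohomology in every bidegree `(p,q)`, for all `2 ≤ n ≤ l ≤ ∞`. -/
theorem phi_quasi_iso (k : Type u) [CommRing k] :
    (∀ (n : ℕ∞), ∀ x ∈ IsubE k n, delta0 k x ∈ IsubE k n) ∧
    ∀ (D : ∀ n : ℕ∞, Cn k n →ₗ[k] Cn k n),
      (∀ (n : ℕ∞) (x : Cinf k), D n (CnMk k n x) = CnMk k n (delta0 k x)) →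
      ∀ (n l : ℕ∞), 2 ≤ n → ∀ (hl : n ≤ l), ∀ (p q : ℤ),
        -- surjectivity of the induced map on cohomology in bidegree `(p,q)`:
        (∀ z : Cn k n, IsHomogQ k n p q z → D n z = 0 →
          ∃ x : Cinf k, IsHomog k p q x ∧ D l (CnMk k l x) = 0 ∧
            ∃ y : Cinf k, IsHomog k p (q - 1) y ∧
              PhiMap k n l hl (CnMk k l x) - z = D n (CnMk k n y)) ∧
        -- injectivity of the induced map on cohomology in bidegree `(p,q)`:
        (∀ x : Cinf k, IsHomog k p q x → D l (CnMk k l x) = 0 →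
          (∃ y : Cinf k, IsHomog k p (q - 1) y ∧
            PhiMap k n l hl (CnMk k l x) = D n (CnMk k n y)) →
          ∃ y' : Cinf k, IsHomog k p (q - 1) y' ∧ CnMk k l x = D l (CnMk k l y')) := by
  
  constructor
  · exact fun n => QI.delta0_presIdeal k n
  · intro D hD n l hn hl p q
    have hn' : 2 ≤ l := le_trans hn hl
    constructor
    · rintro z ⟨x₀, hx₀, rfl⟩ hz
      have hδ : delta0 k x₀ ∈ IsubE k n := by
        rw [← QI.CnMk_eq_zero, ← hD n x₀]
        exact hz
      refine ⟨QI.Pmap k x₀, QI.isHomog_Pmap k hx₀, ?_, -(hmap k x₀),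
        QI.isHomog_neg k (QI.isHomog_hmap k hx₀), ?_⟩
      · rw [hD l, QI.delta0_Pmap, map_zero]
      · rw [QI.PhiMap_mk, hD n, ← map_sub]
        have hrw : QI.Pmap k x₀ - x₀
            = delta0 k (-(hmap k x₀)) + (-(hmap k (delta0 k x₀))) := by
          rw [map_neg]
          have h := QI.homotopy k x₀
          calc QI.Pmap k x₀ - x₀ = -(x₀ - QI.Pmap k x₀) := by abel
          _ = -(delta0 k (hmap k x₀) + hmap k (delta0 k x₀)) := by rw [h]
          _ = -(delta0 k (hmap k x₀)) + -(hmap k (delta0 k x₀)) := by abel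
        rw [hrw, map_add]
        have hz2 : CnMk k n (-(hmap k (delta0 k x₀))) = 0 := by
          rw [QI.CnMk_eq_zero]
          exact neg_mem (QI.hmap_presIdeal k n hn _ hδ)
        rw [hz2, add_zero]
    · rintro x hx hDl ⟨y, hy, hPhi⟩
      have hδl : delta0 k x ∈ IsubE k l := by
        rw [← QI.CnMk_eq_zero, ← hD l x]
        exact hDl
      have hmemn : x - delta0 k y ∈ IsubE k n := by
        rw [← QI.CnMk_eq_iff]
        rw [QI.PhiMap_mk, hD n] at hPhi
        exact hPhi
      have hPx : QI.Pmap k x = 0 := by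
        have h1 : QI.Pmap k (x - delta0 k y) = 0 := QI.Pmap_presIdeal k n hn _ hmemn
        rw [map_sub, QI.Pmap_delta0, sub_zero] at h1
        exact h1
      refine ⟨hmap k x, QI.isHomog_hmap k hx, ?_⟩
      rw [hD l, QI.CnMk_eq_iff]
      have hkey : x - delta0 k (hmap k x) = QI.Pmap k x + hmap k (delta0 k x) := by
        have h := QI.homotopy k x
        have h3 : x = (delta0 k (hmap k x) + hmap k (delta0 k x)) + QI.Pmap k x := by
          rw [h]; abel
        calc x - delta0 k (hmap k x)
            = ((delta0 k (hmap k x) + hmap k (delta0 k x)) + QI.Pmap k x)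
              - delta0 k (hmap k x) := by rw [← h3]
        _ = QI.Pmap k x + hmap k (delta0 k x) := by abel
      rw [hkey, hPx, zero_add]
      exact QI.hmap_presIdeal k l hn' _ hδl
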